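/- Let G be a compact, Hausdorff, totally disconnected topological group and α a topologically transitive topological group automorphism of G (some x ∈ G has dense orbit { α^n(x) : n ∈ ℤ }). Suppose V is an open normal subgroup of G with ⋂_{k∈ℤ} α^k(V) = {1} and V = V₊V₋. Then: (1) there exists k ∈ ℕ such that the setwise product α^k(V₊)·V₋ equals G; and (2) the union ⋃_{n∈ℕ} ( α^n(V₊) ∩ α^{-n}(V₋) ) is dense in G. -/

import Mathlib

open Pointwise Filter Topology

variable {G : Type*}

/-- `V₊ = ⋂_{k ≥ 0} α^k(V)`. -/
def plusPart [Group G] (α : MulAut G) (V : Set G) : Set G :=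
  ⋂ k : ℕ, ⇑(α ^ k) '' V

/-- `V₋ = ⋂_{k ≥ 0} α^{-k}(V)`. -/
def minusPart [Group G] (α : MulAut G) (V : Set G) : Set G :=
  ⋂ k : ℕ, ⇑(α⁻¹ ^ k) '' V

/-- `V` is tidy above for `α` if `V = V₊V₋`. -/
def TidyAbove [Group G] (α : MulAut G) (V : Set G) : Prop :=
  V = plusPart α V * minusPart α V

/-- `V` is tidy below for `α` if `V₊₊` and `V₋₋` are closed. -/
def TidyBelow [Group G] [TopologicalSpace G] (α : MulAut G) (V : Set G) : Prop :=
  IsClosed (⋃ k : ℕ, ⇑(α ^ k) '' plusPart α V) ∧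
  IsClosed (⋃ k : ℕ, ⇑(α⁻¹ ^ k) '' minusPart α V)

/-- `V` is tidy for `α` if it is tidy above and tidy below. -/
def Tidy [Group G] [TopologicalSpace G] (α : MulAut G) (V : Set G) : Prop :=
  TidyAbove α V ∧ TidyBelow α V

/-- The nub of `α`: the intersection of all compact open subgroups tidy for `α`. -/
def nub [Group G] [TopologicalSpace G] (α : MulAut G) : Subgroup G :=
  ⨅ V ∈ {V : Subgroup G | IsCompact (V : Set G) ∧ IsOpen (V : Set G) ∧ Tidy α (V : Set G)}, V

/-- The contraction group `con(α) = { x | α^n(x) → 1 as n → ∞ }`. -/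
def conSet [Group G] [TopologicalSpace G] (α : MulAut G) : Set G :=
  {x : G | Tendsto (fun n : ℕ => (α ^ n) x) atTop (𝓝 1)}

/-- The homoclinic (two-sided contraction) group `bcg(α) = con(α) ∩ con(α⁻¹)`. -/
def bcgSet [Group G] [TopologicalSpace G] (α : MulAut G) : Set G :=
  conSet α ∩ conSet α⁻¹

/-- The bounded contraction group `bcon(α)`. -/
def bconSet [Group G] [TopologicalSpace G] (α : MulAut G) : Set G :=
  {x ∈ conSet α | IsCompact (closure (Set.range fun n : ℕ => (α⁻¹ ^ n) x))}

/-- Image of a subgroup under an automorphism. -/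
def mapAut [Group G] (α : MulAut G) (V : Subgroup G) : Subgroup G where
  carrier := ⇑α '' (V : Set G)
  one_mem' := ⟨1, V.one_mem, map_one α⟩
  mul_mem' := by
    rintro a b ⟨a', ha, rfl⟩ ⟨b', hb, rfl⟩
    exact ⟨a' * b', V.mul_mem ha hb, map_mul α a' b'⟩
  inv_mem' := by
    rintro a ⟨a', ha, rfl⟩
    exact ⟨a'⁻¹, V.inv_mem ha, map_inv α a'⟩

/-- `V₊` as a subgroup. -/
def plusSub [Group G] (α : MulAut G) (V : Subgroup G) : Subgroup G :=
  ⨅ k : ℕ, mapAut (α ^ k) V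

/-- `V₋` as a subgroup. -/
def minusSub [Group G] (α : MulAut G) (V : Subgroup G) : Subgroup G :=
  ⨅ k : ℕ, mapAut (α⁻¹ ^ k) V

/-- The shift automorphism of `F^ℤ`. -/
def shiftAut (F : Type*) [Group F] : MulAut (ℤ → F) where
  toFun f := fun n => f (n + 1)
  invFun f := fun n => f (n - 1)
  left_inv f := by funext n; show f (n - 1 + 1) = f n; congr 1; omega
  right_inv f := by funext n; show f (n + 1 - 1) = f n; congr 1; omega
  map_mul' f g := rfl

/-!
The subgroups `α^k(V₊)` increase and `α^k(V₋)` decrease with `k`, so the subgroups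
`α^n(V₊) α^{-n}(V₋)` exhaust an open `α`-invariant subgroup. It contains a point of the dense
orbit, hence the whole orbit; being open it is closed, so it is all of `G`, and by compactness
one of the `α^n(V₊) α^{-n}(V₋)` already is.
Applying `α^n` gives `α^{2n}(V₊) V₋ = G`.

For density, tidiness and `⋂ α^k(V) = 1` show that `α^{-n}(V₊) α^n(V₋)` contains
`⋂_{|j| ≤ n} α^j(V)`. These subgroups are therefore open, and by compactness they form a
neighbourhood basis of `1`. Sweeping at scale `n` once with `α` and once with `α⁻¹` writes every
element as a product of an element of that neighbourhood and one of
`α^a(V₊) ∩ α^b(V₋)` (Dedekind's modular law), and the latter lies in the union.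
-/

section Algebra
variable [Group G]

lemma Subgroup.sup_inf_sup_le_of_inf_eq_bot {A₀ A B B' : Subgroup G} [B.Normal] [B'.Normal]
    (hA : A₀ ≤ A) (hB : B' ≤ B) (hAB : A ⊓ B = ⊥) : (A₀ ⊔ B) ⊓ (A ⊔ B') ≤ A₀ ⊔ B' := by
  rintro x ⟨hx, hx'⟩
  obtain ⟨a, ha, b, hb, rfl⟩ := Subgroup.mem_sup_of_normal_right.1 hx
  obtain ⟨a', ha', b', hb', he⟩ := Subgroup.mem_sup_of_normal_right.1 hx'
  have hcross : a⁻¹ * a' = b * b'⁻¹ := by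
    rw [inv_mul_eq_iff_eq_mul, ← mul_assoc, ← he, mul_inv_cancel_right]
  have hone : b * b'⁻¹ = 1 := by
    rw [← Subgroup.mem_bot, ← hAB]
    exact ⟨hcross ▸ A.mul_mem (A.inv_mem (hA ha)) ha', B.mul_mem hb (B.inv_mem (hB hb'))⟩
  rw [mul_inv_eq_one.1 hone]
  exact Subgroup.mul_mem_sup ha hb'

lemma Subgroup.sup_mul_inf_eq_univ {A A' B B' : Subgroup G} [A'.Normal] [B.Normal]
    (hA : A' ≤ A) (h₁ : A ⊔ B = ⊤) (h₂ : B' ⊔ A' = ⊤) :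
    ((A' ⊔ B : Subgroup G) : Set G) * ((A ⊓ B' : Subgroup G) : Set G) = Set.univ :=
  calc ((A' ⊔ B : Subgroup G) : Set G) * ((A ⊓ B' : Subgroup G) : Set G)
      = ((A ⊓ B' : Subgroup G) : Set G) * A' * B := by
        rw [← Subgroup.set_mul_normal_comm, Subgroup.mul_normal, mul_assoc]
    _ = (A : Set G) * B := by
      rw [Subgroup.inf_mul_assoc _ _ _ hA, ← Subgroup.mul_normal, h₂, Subgroup.coe_top,
        Set.inter_univ]
    _ = Set.univ := by rw [← Subgroup.mul_normal, h₁, Subgroup.coe_top]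

instance Subgroup.normal_mulAut_smul (a : MulAut G) (H : Subgroup G) [hH : H.Normal] :
    (a • H).Normal :=
  ⟨fun n hn g => by
    rw [Subgroup.mem_pointwise_smul_iff_inv_smul_mem] at hn ⊢
    simpa [MulAut.smul_def] using hH.conj_mem _ hn (a⁻¹ g)⟩

lemma Subgroup.mulAut_smul_top (a : MulAut G) : a • (⊤ : Subgroup G) = ⊤ :=
  eq_top_iff.2 fun _ _ => Subgroup.mem_pointwise_smul_iff_inv_smul_mem.2 trivial

lemma MulAut.image_coe_subgroup (a : MulAut G) (H : Subgroup G) :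
    ⇑a '' (H : Set G) = ↑(a • H) :=
  rfl

lemma mapAut_eq_smul (a : MulAut G) (H : Subgroup G) : mapAut a H = a • H := rfl

lemma Subgroup.inv_smul_mem_smul_iff {a b : MulAut G} {H : Subgroup G} {x : G} :
    a⁻¹ • x ∈ b • H ↔ x ∈ (a * b) • H := by
  rw [Subgroup.mem_pointwise_smul_iff_inv_smul_mem, smul_smul, ← mul_inv_rev,
    ← Subgroup.mem_pointwise_smul_iff_inv_smul_mem]

variable {α : MulAut G} {H : Subgroup G}

lemma range_inv_zpow_apply (x : G) :
    Set.range (fun n : ℤ => (α⁻¹ ^ n) x) = Set.range fun n : ℤ => (α ^ n) x := by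
  simp only [inv_zpow']
  exact neg_surjective.range_comp fun n : ℤ => (α ^ n) x

lemma Monotone.zpow_smul_zpow_smul (h : Monotone fun k : ℤ => α ^ k • H) (c : ℤ) :
    Monotone fun k : ℤ => α ^ k • α ^ c • H :=
  fun _ _ hij => by simpa only [smul_smul, ← zpow_add] using h (add_le_add_left hij c)

lemma Antitone.zpow_smul_zpow_smul (h : Antitone fun k : ℤ => α ^ k • H) (c : ℤ) :
    Antitone fun k : ℤ => α ^ k • α ^ c • H :=
  fun _ _ hij => by simpa only [smul_smul, ← zpow_add] using h (add_le_add_left hij c)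

lemma Antitone.inv_zpow_smul (h : Antitone fun k : ℤ => α ^ k • H) :
    Monotone fun k : ℤ => α⁻¹ ^ k • H :=
  fun _ _ hij => by simpa only [inv_zpow'] using h (neg_le_neg hij)

lemma Monotone.inv_zpow_smul (h : Monotone fun k : ℤ => α ^ k • H) :
    Antitone fun k : ℤ => α⁻¹ ^ k • H :=
  fun _ _ hij => by simpa only [inv_zpow'] using h (neg_le_neg hij)

end Algebra

section PlusMinus
variable [Group G] {α : MulAut G} {V : Subgroup G}

variable (α V) in
lemma coe_plusSub : (plusSub α V : Set G) = plusPart α V := by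
  simp only [plusSub, plusPart, Subgroup.coe_iInf, MulAut.image_coe_subgroup, mapAut_eq_smul]

variable (α V) in
lemma coe_minusSub : (minusSub α V : Set G) = minusPart α V := by
  simp only [minusSub, minusPart, Subgroup.coe_iInf, MulAut.image_coe_subgroup, mapAut_eq_smul]

lemma mem_zpow_smul_plusSub {a : ℤ} {x : G} :
    x ∈ α ^ a • plusSub α V ↔ ∀ j, a ≤ j → x ∈ α ^ j • V := by
  rw [Subgroup.mem_pointwise_smul_iff_inv_smul_mem, plusSub, Subgroup.mem_iInf]
  simp only [mapAut_eq_smul, ← zpow_natCast, Subgroup.inv_smul_mem_smul_iff, ← zpow_add]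
  refine ⟨fun h j hj => ?_, fun h k => h _ (by omega)⟩
  have := h (j - a).toNat
  rwa [show a + ((j - a).toNat : ℤ) = j by omega] at this

lemma mem_zpow_smul_minusSub {b : ℤ} {x : G} :
    x ∈ α ^ b • minusSub α V ↔ ∀ j, j ≤ b → x ∈ α ^ j • V := by
  rw [Subgroup.mem_pointwise_smul_iff_inv_smul_mem, minusSub, Subgroup.mem_iInf]
  simp only [mapAut_eq_smul, ← zpow_natCast, inv_zpow', Subgroup.inv_smul_mem_smul_iff,
    ← zpow_add]
  refine ⟨fun h j hj => ?_, fun h k => h _ (by omega)⟩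
  have := h (b - j).toNat
  rwa [show b + -((b - j).toNat : ℤ) = j by omega] at this

lemma monotone_zpow_smul_plusSub : Monotone fun a : ℤ => α ^ a • plusSub α V :=
  fun _ _ hab _ hx =>
    mem_zpow_smul_plusSub.2 fun j hj => mem_zpow_smul_plusSub.1 hx j (hab.trans hj)

lemma antitone_zpow_smul_minusSub : Antitone fun b : ℤ => α ^ b • minusSub α V :=
  fun _ _ hab _ hx =>
    mem_zpow_smul_minusSub.2 fun j hj => mem_zpow_smul_minusSub.1 hx j (hj.trans hab)

instance plusSub_normal [V.Normal] : (plusSub α V).Normal :=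
  Subgroup.normal_iInf_normal fun k => Subgroup.normal_mulAut_smul (α ^ k) V

instance minusSub_normal [V.Normal] : (minusSub α V).Normal :=
  Subgroup.normal_iInf_normal fun k => Subgroup.normal_mulAut_smul (α⁻¹ ^ k) V

lemma zpow_smul_plusSub_sup_minusSub_le {a b j : ℤ} (haj : a ≤ j) (hjb : j ≤ b) :
    α ^ a • plusSub α V ⊔ α ^ b • minusSub α V ≤ α ^ j • V :=
  sup_le (fun _ hx => mem_zpow_smul_plusSub.1 hx j haj)
    (fun _ hx => mem_zpow_smul_minusSub.1 hx j hjb)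

lemma zpow_smul_plusSub_inf_minusSub_eq_bot (hV : ⨅ k : ℤ, α ^ k • V = ⊥) {a b : ℤ}
    (hab : a ≤ b + 1) : α ^ a • plusSub α V ⊓ α ^ b • minusSub α V = ⊥ := by
  rw [eq_bot_iff, ← hV]
  rintro x ⟨hxa, hxb⟩
  refine Subgroup.mem_iInf.2 fun j => ?_
  rcases le_or_gt a j with h | h
  · exact mem_zpow_smul_plusSub.1 hxa j h
  · exact mem_zpow_smul_minusSub.1 hxb j (by omega)

lemma biInf_zpow_smul_le_plusSub_sup_minusSub [V.Normal] (hV : ⨅ k : ℤ, α ^ k • V = ⊥)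
    (htidy : V = plusSub α V ⊔ minusSub α V) {a b : ℤ} (hab : a ≤ b) :
    ⨅ j ∈ Set.Icc a b, α ^ j • V ≤ α ^ a • plusSub α V ⊔ α ^ b • minusSub α V := by
  induction b, hab using Int.leInduction with
  | base =>
    calc ⨅ j ∈ Set.Icc a a, α ^ j • V ≤ α ^ a • V := biInf_le _ ⟨le_rfl, le_rfl⟩
      _ = α ^ a • plusSub α V ⊔ α ^ a • minusSub α V := by
        rw [← Subgroup.smul_sup, ← htidy]
  | succ b hab ih =>
    calc ⨅ j ∈ Set.Icc a (b + 1), α ^ j • V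
        ≤ (⨅ j ∈ Set.Icc a b, α ^ j • V) ⊓ α ^ (b + 1) • V :=
          le_inf (biInf_mono fun j hj => ⟨hj.1, hj.2.trans (by omega)⟩)
            (biInf_le _ ⟨by omega, le_rfl⟩)
      _ ≤ (α ^ a • plusSub α V ⊔ α ^ b • minusSub α V) ⊓
            (α ^ (b + 1) • plusSub α V ⊔ α ^ (b + 1) • minusSub α V) := by
          rw [← Subgroup.smul_sup, ← htidy]
          exact inf_le_inf_right _ ih
      _ ≤ α ^ a • plusSub α V ⊔ α ^ (b + 1) • minusSub α V :=
          Subgroup.sup_inf_sup_le_of_inf_eq_bot (monotone_zpow_smul_plusSub (by omega))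
            (antitone_zpow_smul_minusSub (by omega))
            (zpow_smul_plusSub_inf_minusSub_eq_bot hV le_rfl)

lemma iInf_zpow_smul_plusSub_sup_minusSub_eq_bot (hV : ⨅ k : ℤ, α ^ k • V = ⊥) :
    ⨅ n : ℕ, (α ^ (-(n : ℤ)) • plusSub α V ⊔ α ^ (n : ℤ) • minusSub α V) = ⊥ := by
  rw [eq_bot_iff, ← hV]
  exact le_iInf fun j =>
    (iInf_le _ j.natAbs).trans (zpow_smul_plusSub_sup_minusSub_le (by omega) (by omega))

end PlusMinus

section Topology
variable [Group G] [TopologicalSpace G] {α : MulAut G}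

lemma continuous_zpow_apply (hα : Continuous ⇑α) (hα' : Continuous ⇑α⁻¹) (k : ℤ) :
    Continuous ⇑(α ^ k) := by
  induction k using Int.induction_on with
  | zero => exact continuous_id
  | succ n ih => rw [zpow_add_one]; exact ih.comp hα
  | pred n ih => rw [zpow_sub_one]; exact ih.comp hα'

lemma IsOpen.zpow_smul (hα : Continuous ⇑α) (hα' : Continuous ⇑α⁻¹) {U : Set G} (hU : IsOpen U)
    (k : ℤ) : IsOpen (α ^ k • U) := by
  have : α ^ k • U = ⇑(α ^ (-k)) ⁻¹' U := by
    ext x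
    rw [Set.mem_smul_set_iff_inv_smul_mem, zpow_neg]
    rfl
  rw [this]
  exact hU.preimage (continuous_zpow_apply hα hα' (-k))

variable [IsTopologicalGroup G]

lemma Subgroup.eq_top_of_zpow_smul_le (htt : ∃ x : G, Dense (Set.range fun n : ℤ => (α ^ n) x))
    {H : Subgroup G} (hH : IsOpen (H : Set G)) (hinv : ∀ k : ℤ, α ^ k • H ≤ H) : H = ⊤ := by
  obtain ⟨x, hx⟩ := htt
  obtain ⟨_, ⟨n₀, rfl⟩, hn₀⟩ := hx.exists_mem_open hH ⟨1, H.one_mem⟩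
  have horbit : Set.range (fun n : ℤ => (α ^ n) x) ⊆ H := by
    rintro _ ⟨n, rfl⟩
    have := hinv (n - n₀) (Subgroup.smul_mem_pointwise_smul _ _ _ hn₀)
    rwa [MulAut.smul_def, ← MulAut.mul_apply, ← zpow_add, sub_add_cancel] at this
  rw [← Subgroup.coe_eq_univ, ← (H.isClosed_of_isOpen hH).closure_eq]
  exact (hx.mono horbit).closure_eq

variable [CompactSpace G]

lemma exists_zpow_smul_sup_eq_top (htt : ∃ x : G, Dense (Set.range fun n : ℤ => (α ^ n) x))
    {P M : Subgroup G} (hP : Monotone fun k : ℤ => α ^ k • P)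
    (hM : Antitone fun k : ℤ => α ^ k • M) (hPM : IsOpen ((P ⊔ M : Subgroup G) : Set G)) :
    ∃ k : ℕ, α ^ (k : ℤ) • P ⊔ M = ⊤ := by
  set D : ℕ → Subgroup G := fun n => α ^ (n : ℤ) • P ⊔ α ^ (-(n : ℤ)) • M
  have hDmono : Monotone D := fun m n hmn => sup_le_sup (hP (by omega)) (hM (by omega))
  have hDopen (n : ℕ) : IsOpen (D n : Set G) :=
    Subgroup.isOpen_mono (hDmono n.zero_le) (by simpa [D] using hPM)
  have hDshift (k : ℤ) (n : ℕ) : α ^ k • D n ≤ D (n + k.natAbs) := by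
    rw [Subgroup.smul_sup, smul_smul, smul_smul, ← zpow_add, ← zpow_add]
    exact sup_le_sup (hP (by omega)) (hM (by omega))
  have hDtop : ⨆ n, D n = ⊤ := by
    refine Subgroup.eq_top_of_zpow_smul_le htt
      (Subgroup.isOpen_mono (le_iSup D 0) (hDopen 0)) fun k => ?_
    rw [Subgroup.pointwise_smul_subset_iff, iSup_le_iff]
    intro n
    rw [Subgroup.subset_pointwise_smul_iff, inv_inv]
    exact (hDshift k n).trans (le_iSup D _)
  obtain ⟨N, hN⟩ := isCompact_univ.elim_directed_cover (fun n => (D n : Set G)) hDopen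
    (by rw [← Subgroup.coe_iSup_of_directed hDmono.directed_le, hDtop, Subgroup.coe_top])
    hDmono.directed_le
  refine ⟨2 * N, ?_⟩
  have h := congrArg (α ^ (N : ℤ) • ·) (Subgroup.coe_eq_univ.1 (Set.univ_subset_iff.1 hN))
  simp only [D, Subgroup.smul_sup, smul_smul, ← zpow_add, Subgroup.mulAut_smul_top] at h
  rwa [add_neg_cancel, zpow_zero, one_smul, ← two_mul] at h

lemma exists_coe_subset_of_iInf_eq_bot {U : ℕ → Subgroup G} (hU : Antitone U)
    (hopen : ∀ n, IsOpen (U n : Set G)) (hbot : ⨅ n, U n = ⊥) {W : Set G} (hW : W ∈ 𝓝 1) :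
    ∃ n, (U n : Set G) ⊆ W := by
  refine exists_subset_nhds_of_isCompact' hU.directed_ge
    (fun n => ((U n).isClosed_of_isOpen (hopen n)).isCompact)
    (fun n => (U n).isClosed_of_isOpen (hopen n)) fun x hx => ?_
  rw [← Subgroup.coe_iInf, hbot, Subgroup.coe_bot, Set.mem_singleton_iff] at hx
  exact hx ▸ hW

lemma dense_of_mul_eq_univ {S : Set G} {U : ℕ → Subgroup G} (hU : Antitone U)
    (hopen : ∀ n, IsOpen (U n : Set G)) (hbot : ⨅ n, U n = ⊥)
    (hS : ∀ n, (U n : Set G) * S = Set.univ) : Dense S := by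
  refine fun x => mem_closure_iff_nhds_one.2 fun W hW => ?_
  obtain ⟨n, hn⟩ := exists_coe_subset_of_iInf_eq_bot hU hopen hbot hW
  obtain ⟨u, hu, y, hy, rfl⟩ := Set.mem_mul.1 (hS n ▸ Set.mem_univ x)
  refine ⟨y, hy, hn ?_⟩
  rw [div_mul_cancel_right]
  exact (U n).inv_mem hu

end Topology

section Density
variable [Group G] [TopologicalSpace G] [IsTopologicalGroup G] {α : MulAut G} {V : Subgroup G}
  [V.Normal]

lemma isOpen_zpow_smul_plusSub_sup_minusSub (hα : Continuous ⇑α) (hα' : Continuous ⇑α⁻¹)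
    (hVo : IsOpen (V : Set G)) (hV : ⨅ k : ℤ, α ^ k • V = ⊥)
    (htidy : V = plusSub α V ⊔ minusSub α V) {a b : ℤ} (hab : a ≤ b) :
    IsOpen ((α ^ a • plusSub α V ⊔ α ^ b • minusSub α V : Subgroup G) : Set G) := by
  have hopen : IsOpen ((⨅ j ∈ Set.Icc a b, α ^ j • V : Subgroup G) : Set G) := by
    simp only [Subgroup.coe_iInf, Subgroup.coe_pointwise_smul]
    exact (Set.finite_Icc a b).isOpen_biInter fun j _ => hVo.zpow_smul hα hα' j
  exact Subgroup.isOpen_mono (biInf_zpow_smul_le_plusSub_sup_minusSub hV htidy hab) hopen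

variable [CompactSpace G]

lemma zpow_smul_plusSub_sup_minusSub_mul_iUnion_eq_univ (hα : Continuous ⇑α)
    (hα' : Continuous ⇑α⁻¹) (htt : ∃ x : G, Dense (Set.range fun n : ℤ => (α ^ n) x))
    (hVo : IsOpen (V : Set G)) (hV : ⨅ k : ℤ, α ^ k • V = ⊥)
    (htidy : V = plusSub α V ⊔ minusSub α V) (N : ℕ) :
    ((α ^ (-(N : ℤ)) • plusSub α V ⊔ α ^ (N : ℤ) • minusSub α V : Subgroup G) : Set G) *
      (⋃ n : ℕ, ((α ^ (n : ℤ) • plusSub α V ⊓ α ^ (-(n : ℤ)) • minusSub α V : Subgroup G) :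
        Set G)) = Set.univ := by
  have hP := monotone_zpow_smul_plusSub (α := α) (V := V)
  have hM := antitone_zpow_smul_minusSub (α := α) (V := V)
  have hopen := isOpen_zpow_smul_plusSub_sup_minusSub hα hα' hVo hV htidy
    (a := -N) (b := N) (by omega)
  obtain ⟨k, hk⟩ := exists_zpow_smul_sup_eq_top htt (hP.zpow_smul_zpow_smul _)
    (hM.zpow_smul_zpow_smul _) hopen
  obtain ⟨l, hl⟩ := exists_zpow_smul_sup_eq_top (α := α⁻¹)
    (by simpa only [range_inv_zpow_apply] using htt) (hM.zpow_smul_zpow_smul _).inv_zpow_smul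
    (hP.zpow_smul_zpow_smul _).inv_zpow_smul (by rwa [sup_comm])
  rw [smul_smul, ← zpow_add] at hk
  rw [inv_zpow', smul_smul, ← zpow_add] at hl
  refine Set.eq_univ_of_univ_subset ?_
  rw [← Subgroup.sup_mul_inf_eq_univ (hP (by omega)) hk hl]
  refine Set.mul_subset_mul_left (Set.subset_iUnion_of_subset (k + l) ?_)
  exact inf_le_inf (hP (by omega)) (hM (by omega))

lemma dense_iUnion_zpow_smul_plusSub_inf_minusSub (hα : Continuous ⇑α)
    (hα' : Continuous ⇑α⁻¹) (htt : ∃ x : G, Dense (Set.range fun n : ℤ => (α ^ n) x))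
    (hVo : IsOpen (V : Set G)) (hV : ⨅ k : ℤ, α ^ k • V = ⊥)
    (htidy : V = plusSub α V ⊔ minusSub α V) :
    Dense (⋃ n : ℕ,
      ((α ^ (n : ℤ) • plusSub α V ⊓ α ^ (-(n : ℤ)) • minusSub α V : Subgroup G) : Set G)) :=
  dense_of_mul_eq_univ
    (fun _ _ hmn => sup_le_sup (monotone_zpow_smul_plusSub (by omega))
      (antitone_zpow_smul_minusSub (by omega)))
    (fun N => isOpen_zpow_smul_plusSub_sup_minusSub hα hα' hVo hV htidy (by omega))
    (iInf_zpow_smul_plusSub_sup_minusSub_eq_bot hV)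
    (zpow_smul_plusSub_sup_minusSub_mul_iUnion_eq_univ hα hα' htt hVo hV htidy)

end Density

theorem prodeq_and_dense_union_general
    [Group G] [TopologicalSpace G] [IsTopologicalGroup G] [CompactSpace G]
    (α : MulAut G) (hαc : Continuous ⇑α) (hαc' : Continuous ⇑(α⁻¹))
    (htt : ∃ x : G, Dense (Set.range fun n : ℤ => (α ^ n) x))
    (V : Subgroup G) [V.Normal] (hVo : IsOpen (V : Set G))
    (hV1 : (⋂ k : ℤ, ⇑(α ^ k) '' (V : Set G)) = ({1} : Set G))
    (hVta : TidyAbove α (V : Set G)) :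
    (∃ k : ℕ, (⇑(α ^ k) '' plusPart α (V : Set G)) * minusPart α (V : Set G) = Set.univ) ∧
    Dense (⋃ n : ℕ,
      (⇑(α ^ n) '' plusPart α (V : Set G)) ∩ (⇑(α⁻¹ ^ n) '' minusPart α (V : Set G))) := by
  have hV : ⨅ k : ℤ, α ^ k • V = ⊥ := by
    rw [← SetLike.coe_set_eq, Subgroup.coe_iInf, Subgroup.coe_bot, ← hV1]
    rfl
  have htidy : V = plusSub α V ⊔ minusSub α V := by
    rw [← SetLike.coe_set_eq, Subgroup.mul_normal, coe_plusSub, coe_minusSub]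
    exact hVta
  constructor
  · obtain ⟨k, hk⟩ := exists_zpow_smul_sup_eq_top htt monotone_zpow_smul_plusSub
      antitone_zpow_smul_minusSub (by rwa [← htidy])
    refine ⟨k, ?_⟩
    rw [← coe_plusSub, ← coe_minusSub, MulAut.image_coe_subgroup, ← Subgroup.mul_normal,
      ← zpow_natCast, hk, Subgroup.coe_top]
  · convert dense_iUnion_zpow_smul_plusSub_inf_minusSub hαc hαc' htt hVo hV htidy using 3 with n
    rw [← coe_plusSub, ← coe_minusSub, MulAut.image_coe_subgroup, MulAut.image_coe_subgroup,
      ← zpow_natCast, ← zpow_natCast, inv_zpow', Subgroup.coe_inf]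

/-- For a topologically transitive compact pair and `V` open normal with
`⋂ α^k(V) = 1` and `V = V₊V₋`: (1) `α^k(V₊)V₋ = G` for some `k`; (2) the union
`⋃ₙ (α^n(V₊) ∩ α^{-n}(V₋))` is dense in `G`. -/
theorem prodeq_and_dense_union
    [Group G] [TopologicalSpace G] [IsTopologicalGroup G] [T2Space G]
    [TotallyDisconnectedSpace G] [CompactSpace G]
    (α : MulAut G) (hαc : Continuous ⇑α) (hαc' : Continuous ⇑(α⁻¹))
    (htt : ∃ x : G, Dense (Set.range fun n : ℤ => (α ^ n) x))
    (V : Subgroup G) [V.Normal] (hVo : IsOpen (V : Set G))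
    (hV1 : (⋂ k : ℤ, ⇑(α ^ k) '' (V : Set G)) = ({1} : Set G))
    (hVta : TidyAbove α (V : Set G)) :
    (∃ k : ℕ, (⇑(α ^ k) '' plusPart α (V : Set G)) * minusPart α (V : Set G) = Set.univ) ∧
    Dense (⋃ n : ℕ,
      (⇑(α ^ n) '' plusPart α (V : Set G)) ∩ (⇑(α⁻¹ ^ n) '' minusPart α (V : Set G))) :=
  prodeq_and_dense_union_general α hαc hαc' htt V hVo hV1 hVta
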